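/- Let f : (0,∞) → ℝ be measurable. Suppose that for almost every a > 0 the limit F(a) = lim_{n→∞} f(a n) exists (as a real number). Then F is constant almost everywhere. -/

import Mathlib

open Filter Set MeasureTheory Topology
open scoped symmDiff Pointwise

/-!
Since `f (k * a * n)` is a subsequence of `f (a * n)`, `F (k * a) = F a` for a.e. `a` and every
positive integer `k`. In logarithmic coordinates `F ∘ exp` is therefore a.e. invariant under
translation by every `log k`, hence by the additive group they generate, which is dense in `ℝ`.
For a Haar measure on a locally compact group, the translations fixing a null measurable set up to
a null set form a closed set, because translation is continuous in measure on sets of finite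
measure. So `F ∘ exp` is a.e. invariant under all translations, and ergodicity of the regular
action makes it a.e. constant.
-/

section HaarMeasure

variable {G : Type*} [AddGroup G] [TopologicalSpace G] [IsTopologicalAddGroup G]
  [LocallyCompactSpace G] [SecondCountableTopology G] [MeasurableSpace G] [BorelSpace G]
  {μ : Measure G} [μ.IsAddHaarMeasure]

theorem isClosed_setOf_preimage_add_ae_eq {s : Set G} (hs : NullMeasurableSet s μ) :
    IsClosed {g : G | (g + ·) ⁻¹' s =ᵐ[μ] s} := by
  set P := {g : G | (g + ·) ⁻¹' s =ᵐ[μ] s}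
  refine isClosed_of_closure_subset fun x hx => ?_
  have : (𝓝[P] x).NeBot := mem_closure_iff_nhdsWithin_neBot.1 hx
  rw [mem_ofPred_eq, ← measure_symmDiff_eq_zero_iff]
  refine measure_null_of_locally_null _ fun y _ => ?_
  obtain ⟨K, hK, hKy⟩ := exists_compact_mem_nhds y
  refine ⟨_, inter_mem_nhdsWithin _ hKy, ?_⟩
  obtain ⟨V, hV, hVx⟩ := exists_compact_mem_nhds x
  set L := closure (V + K)
  set t := s ∩ L
  have ht : μ t ≠ ⊤ := ((hV.add hK).closure.measure_lt_top.trans_le'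
    (measure_mono inter_subset_right)).ne
  let add : C(G, C(G, G)) := ContinuousMap.curry ⟨fun p : G × G => p.1 + p.2, continuous_add⟩
  have hlim : Tendsto (fun g => μ (((g + ·) ⁻¹' t) ∆ ((x + ·) ⁻¹' t))) (𝓝[P] x) (𝓝 0) :=
    tendsto_measure_symmDiff_preimage_nhds_zero (f := add) (g := add x)
      ((add.continuous.tendsto x).mono_left nhdsWithin_le_nhds)
      (.of_forall fun g => measurePreserving_add_left μ g) (measurePreserving_add_left μ x)
      (hs.inter measurableSet_closure.nullMeasurableSet) ht
  -- For `g ∈ V`, translation by `g` or `x` maps `K` into `L`, where `s` and `t` agree.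
  have hbound : ∀ g ∈ P ∩ V,
      μ ((((x + ·) ⁻¹' s) ∆ s) ∩ K) ≤ μ (((g + ·) ⁻¹' t) ∆ ((x + ·) ⁻¹' t)) := by
    rintro g ⟨hgP, hgV⟩
    refine measure_mono_ae ?_
    filter_upwards [EventuallyEq.mem_iff hgP] with z hz
    change z ∈ (((x + ·) ⁻¹' s) ∆ s) ∩ K → z ∈ ((g + ·) ⁻¹' t) ∆ ((x + ·) ⁻¹' t)
    intro hzK
    have hgz : g + z ∈ L := subset_closure (add_mem_add hgV hzK.2)
    have hxz : x + z ∈ L := subset_closure (add_mem_add (mem_of_mem_nhds hVx) hzK.2)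
    simp only [mem_preimage] at hz
    simp only [mem_symmDiff, mem_inter_iff, mem_preimage, t] at hzK ⊢
    tauto
  refine nonpos_iff_eq_zero.1 (ge_of_tendsto hlim ?_)
  filter_upwards [self_mem_nhdsWithin, mem_nhdsWithin_of_mem_nhds hVx] with g hgP hgV
  exact hbound g ⟨hgP, hgV⟩

theorem isClosed_aestabilizer_vadd_self {s : Set G} (hs : NullMeasurableSet s μ) :
    IsClosed (AddAction.aestabilizer G μ s : Set G) := by
  have : (AddAction.aestabilizer G μ s : Set G) =
      Neg.neg ⁻¹' {g : G | (g + ·) ⁻¹' s =ᵐ[μ] s} := by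
    ext g
    simp only [SetLike.mem_coe, AddAction.mem_aestabilizer, mem_preimage, mem_ofPred_eq,
      ← preimage_vadd_neg, vadd_eq_add]
  rw [this]
  exact (isClosed_setOf_preimage_add_ae_eq hs).preimage continuous_neg

theorem aeconst_of_dense_aestabilizer_vadd_self {s : Set G} (hs : NullMeasurableSet s μ)
    (hd : Dense (AddAction.aestabilizer G μ s : Set G)) : EventuallyConst s (ae μ) := by
  refine aeconst_of_forall_vadd_ae_eq G hs fun g => ?_
  rw [← AddAction.mem_aestabilizer, ← SetLike.mem_coe,
    ← (isClosed_aestabilizer_vadd_self hs).closure_eq, hd.closure_eq]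
  trivial

theorem exists_ae_eq_const_of_dense_of_ae_eq_comp_add {X : Type*} [MeasurableSpace X]
    [MeasurableSpace.CountablySeparated X] [Nonempty X] {g : G → X} (hg : NullMeasurable g μ)
    {D : Set G} (hD : Dense (AddSubgroup.closure D : Set G))
    (hinv : ∀ d ∈ D, (fun x => g (d + x)) =ᵐ[μ] g) : ∃ c, g =ᵐ[μ] fun _ => c := by
  refine exists_eventuallyEq_const_of_forall_separating MeasurableSet fun U hU => ?_
  have hstab : AddSubgroup.closure D ≤ AddAction.aestabilizer G μ (g ⁻¹' U) := by
    refine (AddSubgroup.closure_le _).2 fun d hd => ?_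
    rw [SetLike.mem_coe, ← AddSubgroup.neg_mem_iff, AddAction.mem_aestabilizer,
      ← preimage_vadd_neg, neg_neg]
    exact (hinv d hd).mono fun x hx => congrArg (· ∈ U) hx
  exact eventuallyConst_set.1 (aeconst_of_dense_aestabilizer_vadd_self (hg hU) (hD.mono hstab))

end HaarMeasure

namespace Real

theorem quasiMeasurePreserving_exp :
    Measure.QuasiMeasurePreserving exp volume (volume.restrict (Ioi 0)) := by
  refine ⟨measurable_exp, Measure.AbsolutelyContinuous.mk fun s hs h0 => ?_⟩
  rw [Measure.restrict_apply hs] at h0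
  rw [Measure.map_apply measurable_exp hs]
  refine measure_mono_null ?_ (addHaar_image_eq_zero_of_differentiableOn_of_addHaar_eq_zero
    volume (fun y hy => (differentiableAt_log hy.2.ne').differentiableWithinAt) h0)
  exact fun x hx => ⟨exp x, ⟨hx, exp_pos x⟩, log_exp x⟩

theorem quasiMeasurePreserving_log :
    Measure.QuasiMeasurePreserving log (volume.restrict (Ioi 0)) volume := by
  refine ⟨measurable_log, Measure.AbsolutelyContinuous.mk fun s hs h0 => ?_⟩
  rw [Measure.map_apply measurable_log hs, Measure.restrict_apply (measurable_log hs)]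
  refine measure_mono_null ?_ (addHaar_image_eq_zero_of_differentiableOn_of_addHaar_eq_zero
    volume differentiable_exp.differentiableOn h0)
  exact fun x hx => ⟨log x, hx.1, exp_log hx.2⟩

theorem dense_addSubgroupClosure_range_log_natCast_add_one :
    Dense (AddSubgroup.closure (range fun n : ℕ => log (n + 1)) : Set ℝ) := by
  refine AddSubgroup.dense_of_not_isolated_zero _ fun ε hε => ?_
  obtain ⟨n, hn⟩ := exists_nat_one_div_lt hε
  have hn₀ : (0 : ℝ) < n + 1 := n.cast_add_one_pos
  refine ⟨log (n + 2) - log (n + 1),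
    sub_mem (AddSubgroup.subset_closure ⟨n + 1, by push_cast; ring_nf⟩)
      (AddSubgroup.subset_closure ⟨n, rfl⟩), ?_, ?_⟩
  · exact sub_pos.2 (log_lt_log hn₀ (by linarith))
  · calc log (n + 2) - log (n + 1) = log ((n + 2) / (n + 1)) :=
          (log_div (by linarith) hn₀.ne').symm
      _ ≤ (n + 2) / (n + 1) - 1 := log_le_sub_one_of_pos (by positivity)
      _ = 1 / (n + 1) := by field_simp; ring
      _ < ε := hn

end Real

theorem stmt_5 (f F : ℝ → ℝ) (hmeas : Measurable f)
    (hF : ∀ᵐ a ∂(volume.restrict (Set.Ioi (0:ℝ))),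
      Tendsto (fun n : ℕ => f (a * n)) atTop (nhds (F a))) :
    ∃ C : ℝ, ∀ᵐ a ∂(volume.restrict (Set.Ioi (0:ℝ))), F a = C := by
  have hFm : AEMeasurable F (volume.restrict (Ioi 0)) :=
    aemeasurable_of_tendsto_metrizable_ae atTop
      (fun n => (hmeas.comp (measurable_mul_const _)).aemeasurable) hF
  have hFexp : ∀ᵐ x : ℝ, Tendsto (fun n : ℕ => f (Real.exp x * n)) atTop (𝓝 (F (Real.exp x))) :=
    Real.quasiMeasurePreserving_exp.ae hF
  have hinv : ∀ d ∈ range fun k : ℕ => Real.log (k + 1),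
      (fun x => (F ∘ Real.exp) (d + x)) =ᵐ[volume] F ∘ Real.exp := by
    rintro _ ⟨k, rfl⟩
    filter_upwards [hFexp, (quasiMeasurePreserving_add_left volume _).ae hFexp]
      with x hx hkx
    have hsub := hx.comp (tendsto_id.const_mul_atTop' k.succ_pos)
    refine tendsto_nhds_unique hkx (hsub.congr fun n => ?_)
    simp only [Function.comp_apply, id, Real.exp_add, Real.exp_log k.cast_add_one_pos]
    push_cast
    ring_nf
  obtain ⟨C, hC⟩ := exists_ae_eq_const_of_dense_of_ae_eq_comp_add
    (hFm.comp_quasiMeasurePreserving Real.quasiMeasurePreserving_exp).nullMeasurable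
    Real.dense_addSubgroupClosure_range_log_natCast_add_one hinv
  refine ⟨C, ?_⟩
  filter_upwards [Real.quasiMeasurePreserving_log.ae hC, ae_restrict_mem measurableSet_Ioi]
    with a ha ha₀
  simpa [Real.exp_log ha₀] using ha
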